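/- arXiv:2006.05338 — 2 statements merged into one kernel-verified Lean document; each statement's English description precedes it below -/
import Mathlib

section
/- Lower-bound property of the classical DA training objective: let p^1,…,p^K and q^1,…,q^K be probability mass functions on a finite set obtained from fixed base distributions p^0 and q^0 by bijections T_1,…,T_K of the finite set (i.e., p^m(x) = p^0(T_m⁻¹(x)) and q^m(x) = q^0(T_m⁻¹(x))). Then for any weights w_m ≥ 0 with ∑ w_m = 1, the mixtures p = ∑_m w_m p^m and q = ∑_m w_m q^m satisfy JS(p ‖ q) ≤ JS(p^0 ‖ q^0). -/
/-!
The log-sum inequality makes `KL` jointly convex on pairs `(p, q)` with `q = 0 → p = 0`,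
which holds for both terms of `JS` since the midpoint dominates; hence `JS` is jointly convex.
The mixtures are a convex combination of the pairs `(p⁰ ∘ T_m⁻¹, q⁰ ∘ T_m⁻¹)`, each of which has
the same `JS` divergence as `(p⁰, q⁰)` because relabeling only permutes the summands.
-/

open Real Finset

/-- KL divergence on a finite set, with the convention `0 * log 0 = 0`. -/
noncomputable def KL {X : Type*} [Fintype X] (p q : X → ℝ) : ℝ :=
  ∑ x, p x * Real.log (p x / q x)

/-- Jensen–Shannon divergence on a finite set. -/
noncomputable def JS {X : Type*} [Fintype X] (p q : X → ℝ) : ℝ :=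
  (1/2) * KL p (fun x => (p x + q x) / 2) + (1/2) * KL q (fun x => (p x + q x) / 2)

theorem sum_mul_log_div_le {ι : Type*} (s : Finset ι) (a b : ι → ℝ)
    (ha : ∀ i ∈ s, 0 ≤ a i) (hb : ∀ i ∈ s, 0 ≤ b i) (hab : ∀ i ∈ s, b i = 0 → a i = 0) :
    (∑ i ∈ s, a i) * log ((∑ i ∈ s, a i) / ∑ i ∈ s, b i) ≤ ∑ i ∈ s, a i * log (a i / b i) := by
  set A := ∑ i ∈ s, a i
  set B := ∑ i ∈ s, b i
  obtain hB | hB : 0 = B ∨ 0 < B := (sum_nonneg hb).eq_or_lt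
  · have ha0 : ∀ i ∈ s, a i = 0 := fun i hi =>
      hab i hi ((sum_eq_zero_iff_of_nonneg hb).mp hB.symm i hi)
    rw [sum_eq_zero fun i hi => by rw [ha0 i hi, zero_mul]]
    simp [A, sum_eq_zero ha0]
  have hweighted : ∀ i ∈ s, ∀ c, (b i / B) • (a i / b i * c) = a i * c / B := fun i hi c => by
    have hcancel : b i * (a i / b i) = a i := by
      by_cases hbi : b i = 0
      · simp [hbi, hab i hi hbi]
      · exact mul_div_cancel₀ _ hbi
    calc (b i / B) • (a i / b i * c) = b i * (a i / b i) * c / B := by rw [smul_eq_mul]; ring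
      _ = a i * c / B := by rw [hcancel]
  have jensen := convexOn_mul_log.map_sum_le (t := s) (w := fun i => b i / B)
    (p := fun i => a i / b i) (fun i hi => div_nonneg (hb i hi) hB.le)
    (by rw [← sum_div, div_self hB.ne'])
    (fun i hi => Set.mem_Ici.mpr (div_nonneg (ha i hi) (hb i hi)))
  have hmean : ∑ i ∈ s, (b i / B) • (a i / b i) = A / B := by
    rw [sum_div]
    exact sum_congr rfl fun i hi => by simpa using hweighted i hi 1
  rw [hmean, sum_congr rfl fun i hi => hweighted i hi _, ← sum_div, le_div_iff₀ hB] at jensen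
  calc A * log (A / B) = A / B * log (A / B) * B := by field_simp
    _ ≤ _ := jensen

section Mixture

variable {X ι : Type*} [Fintype X] (s : Finset ι) (w : ι → ℝ) (p q : ι → X → ℝ)

theorem KL_mixture_le (hw : ∀ i ∈ s, 0 ≤ w i) (hp : ∀ i x, 0 ≤ p i x) (hq : ∀ i x, 0 ≤ q i x)
    (hpq : ∀ i x, q i x = 0 → p i x = 0) :
    KL (fun x => ∑ i ∈ s, w i * p i x) (fun x => ∑ i ∈ s, w i * q i x)
      ≤ ∑ i ∈ s, w i * KL (p i) (q i) := by
  have hpointwise : ∀ x,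
      (∑ i ∈ s, w i * p i x) * log ((∑ i ∈ s, w i * p i x) / ∑ i ∈ s, w i * q i x)
      ≤ ∑ i ∈ s, w i * (p i x * log (p i x / q i x)) := fun x => by
    refine (sum_mul_log_div_le s _ _ (fun i hi => mul_nonneg (hw i hi) (hp i x))
      (fun i hi => mul_nonneg (hw i hi) (hq i x)) fun i _ h => ?_).trans_eq
      (sum_congr rfl fun i _ => ?_)
    · rcases mul_eq_zero.mp h with h | h <;> simp [h, hpq i x]
    · rcases eq_or_ne (w i) 0 with h | h
      · simp [h]
      · rw [mul_div_mul_left _ _ h, mul_assoc]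
  calc _ ≤ ∑ x, ∑ i ∈ s, w i * (p i x * log (p i x / q i x)) := sum_le_sum fun x _ => hpointwise x
    _ = ∑ i ∈ s, w i * KL (p i) (q i) := by simp only [KL, mul_sum]; exact sum_comm

theorem JS_mixture_le (hw : ∀ i ∈ s, 0 ≤ w i) (hp : ∀ i x, 0 ≤ p i x) (hq : ∀ i x, 0 ≤ q i x) :
    JS (fun x => ∑ i ∈ s, w i * p i x) (fun x => ∑ i ∈ s, w i * q i x)
      ≤ ∑ i ∈ s, w i * JS (p i) (q i) := by
  set r := fun i x => (p i x + q i x) / 2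
  have hr : ∀ i x, 0 ≤ r i x := fun i x => by have := hp i x; have := hq i x; positivity
  have hmid : (fun x => ((∑ i ∈ s, w i * p i x) + ∑ i ∈ s, w i * q i x) / 2)
      = fun x => ∑ i ∈ s, w i * r i x := by
    funext x; rw [← sum_add_distrib, sum_div]; exact sum_congr rfl fun i _ => by ring
  have hdom : ∀ i x, r i x = 0 → p i x = 0 ∧ q i x = 0 := fun i x h => by
    have := hp i x; have := hq i x; simp only [r] at h; constructor <;> linarith
  have hp_KL := KL_mixture_le s w p r hw hp hr fun i x h => (hdom i x h).1
  have hq_KL := KL_mixture_le s w q r hw hq hr fun i x h => (hdom i x h).2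
  simp only [JS, hmid, mul_add, sum_add_distrib, mul_left_comm (w _) (1 / 2 : ℝ), ← mul_sum]
  linarith

end Mixture

theorem JS_comp_equiv {X Y : Type*} [Fintype X] [Fintype Y] (e : Y ≃ X) (p q : X → ℝ) :
    JS (fun y => p (e y)) (fun y => q (e y)) = JS p q := by
  simp only [JS, KL, e.sum_comp fun x => p x * log (p x / ((p x + q x) / 2)),
    e.sum_comp fun x => q x * log (q x / ((p x + q x) / 2))]

theorem js_da_mixture_le_general {X : Type*} [Fintype X] {K : ℕ}
    (p0 q0 : X → ℝ) (T : Fin K → X ≃ X) (w : Fin K → ℝ)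
    (hp0 : ∀ x, 0 ≤ p0 x) (hq0 : ∀ x, 0 ≤ q0 x)
    (hw0 : ∀ m, 0 ≤ w m) (hw1 : ∑ m, w m = 1) :
    JS (fun x => ∑ m, w m * p0 ((T m).symm x))
        (fun x => ∑ m, w m * q0 ((T m).symm x))
      ≤ JS p0 q0 :=
  calc _ ≤ ∑ m, w m * JS (fun x => p0 ((T m).symm x)) (fun x => q0 ((T m).symm x)) :=
        JS_mixture_le _ w (fun m x => p0 ((T m).symm x)) (fun m x => q0 ((T m).symm x))
          (fun m _ => hw0 m) (fun _ _ => hp0 _) (fun _ _ => hq0 _)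
    _ = JS p0 q0 := by simp only [JS_comp_equiv, ← sum_mul, hw1, one_mul]

/-- Lower-bound property of the classical DA objective: mixtures of common
bijective relabelings of `p⁰`, `q⁰` have JS divergence at most `JS(p⁰ ‖ q⁰)`. -/
theorem js_da_mixture_le {X : Type*} [Fintype X] {K : ℕ}
    (p0 q0 : X → ℝ) (T : Fin K → X ≃ X) (w : Fin K → ℝ)
    (hp0 : ∀ x, 0 ≤ p0 x) (hq0 : ∀ x, 0 ≤ q0 x)
    (hp1 : ∑ x, p0 x = 1) (hq1 : ∑ x, q0 x = 1)
    (hw0 : ∀ m, 0 ≤ w m) (hw1 : ∑ m, w m = 1) :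
    JS (fun x => ∑ m, w m * p0 ((T m).symm x))
        (fun x => ∑ m, w m * q0 ((T m).symm x))
      ≤ JS p0 q0 :=
  js_da_mixture_le_general p0 q0 T w hp0 hq0 hw0 hw1
end

section
/- GAN value at the optimal discriminator equals JS up to constants: for probability mass functions p_d and p_g on a finite set with p_d(x)+p_g(x) > 0 for all x, define D*(x) = p_d(x)/(p_d(x)+p_g(x)). Then ∑_x p_d(x) log D*(x) + ∑_x p_g(x) log(1 − D*(x)) = −log 4 + 2·JS(p_d ‖ p_g). -/
open Real Finset

/-! Halving the reference measure adds `log 2` per unit of mass; with `m = p_d + p_g` this turns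
each half of `2 · JS` into a term of the GAN value, and the two `log 2`s give `log 4`. -/

lemma mul_log_div_div_two (a : ℝ) {s : ℝ} (hs : s ≠ 0) :
    a * log (a / (s / 2)) = a * log (a / s) + a * log 2 := by
  rcases eq_or_ne a 0 with rfl | ha
  · simp
  · rw [div_div_eq_mul_div, mul_div_right_comm, log_mul (div_ne_zero ha hs) two_ne_zero, mul_add]

lemma KL_div_two {X : Type*} [Fintype X] (p m : X → ℝ) (hm : ∀ x, m x ≠ 0) :
    KL p (fun x => m x / 2) = ∑ x, p x * log (p x / m x) + (∑ x, p x) * log 2 := by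
  simp only [KL, mul_log_div_div_two _ (hm _), sum_add_distrib, sum_mul]

lemma one_sub_div_add {a b : ℝ} (h : a + b ≠ 0) : 1 - a / (a + b) = b / (a + b) := by
  rw [one_sub_div h, add_sub_cancel_left]

theorem gan_value_at_optimal_discriminator_general {X : Type*} [Fintype X]
    (pd pg : X → ℝ)
    (hpd1 : ∑ x, pd x = 1) (hpg1 : ∑ x, pg x = 1)
    (hpos : ∀ x, 0 < pd x + pg x) :
    (∑ x, pd x * Real.log (pd x / (pd x + pg x)))
      + (∑ x, pg x * Real.log (1 - pd x / (pd x + pg x)))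
    = -Real.log 4 + 2 * JS pd pg := by
  have hm : ∀ x, pd x + pg x ≠ 0 := fun x => (hpos x).ne'
  have hlog4 : log 4 = 2 * log 2 := by
    rw [show (4 : ℝ) = 2 ^ 2 by norm_num, log_pow, Nat.cast_ofNat]
  simp only [JS, KL_div_two pd (fun x => pd x + pg x) hm, KL_div_two pg (fun x => pd x + pg x) hm,
    one_sub_div_add (hm _), hpd1, hpg1, hlog4]
  ring

/-- The GAN value at the optimal discriminator `D*(x) = p_d(x)/(p_d(x)+p_g(x))`
is `-log 4 + 2 · JS(p_d ‖ p_g)`. -/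
theorem gan_value_at_optimal_discriminator {X : Type*} [Fintype X]
    (pd pg : X → ℝ)
    (hpd0 : ∀ x, 0 ≤ pd x) (hpg0 : ∀ x, 0 ≤ pg x)
    (hpd1 : ∑ x, pd x = 1) (hpg1 : ∑ x, pg x = 1)
    (hpos : ∀ x, 0 < pd x + pg x) :
    (∑ x, pd x * Real.log (pd x / (pd x + pg x)))
      + (∑ x, pg x * Real.log (1 - pd x / (pd x + pg x)))
    = -Real.log 4 + 2 * JS pd pg :=
  gan_value_at_optimal_discriminator_general pd pg hpd1 hpg1 hpos
end
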